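/- arXiv:1909.11454 — 6 statements merged into one kernel-verified Lean document; each statement's English description precedes it below -/
import Mathlib

section
/- Let G be a connected bipartite vd-graph with parts U and W. If g and h are automorphisms of G such that g(u) = h(u) for every u ∈ U, then g = h. In particular, an automorphism of any graph on vertex set U extends in at most one way to an automorphism of G. -/
open SimpleGraph

/-- Let `G` be a connected bipartite vd-graph with parts `U` and `W`.
If `g` and `h` are automorphisms of `G` such that `g u = h u` for every `u ∈ U`,
then `g = h`. -/
theorem stmt_3 {V : Type*} (G : SimpleGraph V) (U W : Set V)
    (hcover : U ∪ W = Set.univ) (hdisj : U ∩ W = ∅)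
    (hbip : ∀ v w : V, G.Adj v w → (v ∈ U ∧ w ∈ W) ∨ (v ∈ W ∧ w ∈ U))
    (hconn : G.Connected)
    (hvd : ∀ v w : V, G.neighborSet v = G.neighborSet w → v = w)
    (g h : G ≃g G) (hgh : ∀ u ∈ U, g u = h u) :
    g = h := by
  have key : ∀ v : V, g v = h v := by
    intro v
    have hv : v ∈ U ∪ W := hcover ▸ Set.mem_univ v
    rcases hv with hv | hv
    · exact hgh v hv
    · have hvU : v ∉ U := fun h' => Set.eq_empty_iff_forall_notMem.mp hdisj v ⟨h', hv⟩
      have hnb : ∀ u, G.Adj v u → u ∈ U := by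
        intro u hu
        rcases hbip v u hu with ⟨h1, _⟩ | ⟨_, h2⟩
        · exact absurd h1 hvU
        · exact h2
      apply hvd
      ext x
      simp only [mem_neighborSet]
      constructor
      · intro hx
        have hadj : G.Adj v (g.symm x) := by
          have := g.map_adj_iff (v := v) (w := g.symm x)
          rw [g.apply_symm_apply] at this
          exact this.mp hx
        have hU := hnb _ hadj
        have : h (g.symm x) = x := by rw [← hgh _ hU, g.apply_symm_apply]
        have := h.map_adj_iff (v := v) (w := g.symm x)
        rw [‹h (g.symm x) = x›] at this
        exact this.mpr hadj
      · intro hx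
        have hadj : G.Adj v (h.symm x) := by
          have := h.map_adj_iff (v := v) (w := h.symm x)
          rw [h.apply_symm_apply] at this
          exact this.mp hx
        have hU := hnb _ hadj
        have : g (h.symm x) = x := by rw [hgh _ hU, h.apply_symm_apply]
        have := g.map_adj_iff (v := v) (w := h.symm x)
        rw [‹g (h.symm x) = x›] at this
        exact this.mpr hadj
  exact RelIso.ext key
end

section
/- Let G be a connected bipartite vd-graph with parts U and W, and let G₁ be an attached graph to G with vertex set U. Then the stabilizer S(U) = {f ∈ Aut(G) : f(U) = U} is a subgroup of Aut(G) isomorphic (as a group) to Aut(G₁). -/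
open SimpleGraph

/-- A graph `G₁` on the vertex set `U` is an *attached graph* to the bipartite graph `G`:
(i) every automorphism of `G₁` extends to an automorphism of `G`, and
(ii) for every automorphism of `G` fixing `U` setwise, its restriction to `U` is an
automorphism of `G₁`. -/
structure IsAttached {V : Type*} (G : SimpleGraph V) (U : Set V)
    (G₁ : SimpleGraph U) : Prop where
  extends_aut : ∀ φ : G₁ ≃g G₁, ∃ ψ : G ≃g G, ∀ u : U, ψ ↑u = ↑(φ u)
  restricts_aut : ∀ ψ : G ≃g G, ⇑ψ '' U = U → ∃ φ : G₁ ≃g G₁, ∀ u : U, (↑(φ u) : V) = ψ ↑u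

/-- Let `G` be a connected bipartite vd-graph with parts `U` and `W`, and let
`G₁` be an attached graph to `G` with vertex set `U`. Then the stabilizer
`S(U) = {f ∈ Aut(G) : f(U) = U}` is a subgroup of `Aut(G)` isomorphic to `Aut(G₁)`. -/
theorem stmt_4 {V : Type*} (G : SimpleGraph V) (U W : Set V)
    (hcover : U ∪ W = Set.univ) (hdisj : U ∩ W = ∅)
    (hbip : ∀ v w : V, G.Adj v w → (v ∈ U ∧ w ∈ W) ∨ (v ∈ W ∧ w ∈ U))
    (hconn : G.Connected)
    (hvd : ∀ v w : V, G.neighborSet v = G.neighborSet w → v = w)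
    (G₁ : SimpleGraph U) (hatt : IsAttached G U G₁) :
    ∃ S : Subgroup (G ≃g G),
      (S : Set (G ≃g G)) = {f : G ≃g G | ⇑f '' U = U} ∧ Nonempty (S ≃* (G₁ ≃g G₁)) := by
  classical
  have hadjsymm : ∀ (f : G ≃g G) (v x : V), G.Adj (f v) x ↔ G.Adj v (f.symm x) := by
    intro f v x
    conv_lhs => rw [show x = f (f.symm x) from (f.apply_symm_apply x).symm]
    exact f.map_adj_iff
  -- neighbors of vertices outside U lie in U
  have hNU : ∀ v, v ∉ U → ∀ x, G.Adj v x → x ∈ U := by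
    intro v hv x hadj
    rcases hbip v x hadj with ⟨h1, _⟩ | ⟨_, h2⟩
    · exact absurd h1 hv
    · exact h2
  -- two automorphisms agreeing on U are equal
  have agree : ∀ f g : G ≃g G, (∀ u ∈ U, f u = g u) → f = g := by
    intro f g h
    have : ∀ v, f v = g v := by
      intro v
      by_cases hv : v ∈ U
      · exact h v hv
      · apply hvd
        ext x
        simp only [mem_neighborSet]
        constructor
        · intro hadj
          have h1 : G.Adj v (f.symm x) := (hadjsymm f v x).mp hadj
          have hU : (f.symm x : V) ∈ U := hNU v hv _ h1
          have hx : g (f.symm x) = x := by rw [← h _ hU, f.apply_symm_apply]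
          have h2 : G.Adj (g v) (g (f.symm x)) := g.map_adj_iff.mpr h1
          rwa [hx] at h2
        · intro hadj
          have h1 : G.Adj v (g.symm x) := (hadjsymm g v x).mp hadj
          have hU : (g.symm x : V) ∈ U := hNU v hv _ h1
          have hx : f (g.symm x) = x := by rw [h _ hU, g.apply_symm_apply]
          have h2 : G.Adj (f v) (f (g.symm x)) := f.map_adj_iff.mpr h1
          rwa [hx] at h2
    exact RelIso.ext this
  let S : Subgroup (G ≃g G) :=
    { carrier := {f : G ≃g G | ⇑f '' U = U}
      one_mem' := by
        show ⇑(1 : G ≃g G) '' U = U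
        have : ⇑(1 : G ≃g G) = id := rfl
        rw [this, Set.image_id]
      mul_mem' := by
        intro f g hf hg
        show ⇑(f * g) '' U = U
        have : ⇑(f * g) = ⇑f ∘ ⇑g := rfl
        rw [this, Set.image_comp, hg, hf]
      inv_mem' := by
        intro f hf
        show ⇑(f⁻¹ : G ≃g G) '' U = U
        have hf' : ⇑f '' U = U := hf
        have h1 : ⇑(f⁻¹ : G ≃g G) = ⇑f.symm := rfl
        rw [h1]
        conv_lhs => rw [← hf']
        rw [Set.image_image]
        simp }
  have hmemS : ∀ f : G ≃g G, f ∈ S ↔ ⇑f '' U = U := fun f => Iff.rfl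
  refine ⟨S, rfl, ?_⟩
  have hmem : ∀ f : S, ⇑(f : G ≃g G) '' U = U := fun f => f.2
  let Φ : S → (G₁ ≃g G₁) := fun f => (hatt.restricts_aut f (hmem f)).choose
  have hΦ : ∀ (f : S) (u : U), ((Φ f u : U) : V) = (f : G ≃g G) ↑u :=
    fun f => (hatt.restricts_aut f (hmem f)).choose_spec
  have hmul : ∀ f g : S, Φ (f * g) = Φ f * Φ g := by
    intro f g
    apply RelIso.ext
    intro u
    apply Subtype.coe_injective
    show ((Φ (f * g) u : U) : V) = ((Φ f (Φ g u) : U) : V)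
    have h1 : ((Φ (f * g) u : U) : V) = (f : G ≃g G) ((g : G ≃g G) ↑u) := hΦ (f * g) u
    rw [h1, hΦ f (Φ g u), hΦ g u]
  have hinj : Function.Injective Φ := by
    intro f g hfg
    apply Subtype.ext
    apply agree
    intro u hu
    have h1 := hΦ f ⟨u, hu⟩
    have h2 := hΦ g ⟨u, hu⟩
    rw [← h1, ← h2, hfg]
  have hsurj : Function.Surjective Φ := by
    intro φ
    obtain ⟨ψ, hψ⟩ := hatt.extends_aut φ
    have hψU : ψ ∈ S := by
      rw [hmemS]
      apply Set.eq_of_subset_of_subset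
      · rintro x ⟨u, hu, rfl⟩
        rw [hψ ⟨u, hu⟩]
        exact (φ ⟨u, hu⟩).2
      · intro u hu
        refine ⟨↑(φ.symm ⟨u, hu⟩), (φ.symm ⟨u, hu⟩).2, ?_⟩
        rw [hψ (φ.symm ⟨u, hu⟩)]
        simp
    refine ⟨⟨ψ, hψU⟩, ?_⟩
    apply RelIso.ext
    intro u
    apply Subtype.coe_injective
    show ((Φ ⟨ψ, hψU⟩ u : U) : V) = ((φ u : U) : V)
    rw [hΦ ⟨ψ, hψU⟩ u, hψ u]
  exact ⟨MulEquiv.ofBijective (MonoidHom.mk' Φ hmul) ⟨hinj, hsurj⟩⟩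
end

section
/- Let G be a connected bipartite vd-graph with parts U and W, and let G₁ be an attached graph to G with vertex set U. If every automorphism f of Aut(G) satisfies f(U) = U, then Aut(G) ≅ Aut(G₁). -/
open SimpleGraph

/-- Let `G` be a connected bipartite vd-graph with parts `U` and `W`, and let
`G₁` be an attached graph to `G` with vertex set `U`. If every automorphism `f` of `G`
satisfies `f(U) = U`, then `Aut(G) ≅ Aut(G₁)`. -/
theorem stmt_5 {V : Type*} (G : SimpleGraph V) (U W : Set V)
    (hcover : U ∪ W = Set.univ) (hdisj : U ∩ W = ∅)
    (hbip : ∀ v w : V, G.Adj v w → (v ∈ U ∧ w ∈ W) ∨ (v ∈ W ∧ w ∈ U))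
    (hconn : G.Connected)
    (hvd : ∀ v w : V, G.neighborSet v = G.neighborSet w → v = w)
    (G₁ : SimpleGraph U) (hatt : IsAttached G U G₁)
    (hstab : ∀ f : G ≃g G, ⇑f '' U = U) :
    Nonempty ((G ≃g G) ≃* (G₁ ≃g G₁)) := by
  classical
  -- image of neighbor set under an automorphism
  have himg : ∀ (ψ : G ≃g G) (v : V), G.neighborSet (ψ v) = ⇑ψ '' G.neighborSet v := by
    intro ψ v
    ext x
    simp only [mem_neighborSet, Set.mem_image, mem_neighborSet]
    constructor
    · intro h
      refine ⟨ψ.symm x, ?_, ψ.apply_symm_apply x⟩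
      have h2 : G.Adj (ψ.symm (ψ v)) (ψ.symm x) := ψ.symm.map_adj_iff.mpr h
      rwa [ψ.symm_apply_apply] at h2
    · rintro ⟨y, hy, rfl⟩
      exact ψ.map_adj_iff.mpr hy
  -- two automorphisms of G agreeing on U are equal
  have hext : ∀ ψ₁ ψ₂ : G ≃g G, (∀ u ∈ U, ψ₁ u = ψ₂ u) → ψ₁ = ψ₂ := by
    intro ψ₁ ψ₂ h
    have hfun : ∀ v, ψ₁ v = ψ₂ v := by
      intro v
      by_cases hv : v ∈ U
      · exact h v hv
      · apply hvd
        rw [himg ψ₁, himg ψ₂]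
        apply Set.image_congr
        intro y hy
        apply h
        rcases hbip v y hy with ⟨hvU, _⟩ | ⟨_, hyU⟩
        · exact absurd hvU hv
        · exact hyU
    exact RelIso.ext hfun
  -- two automorphisms of G₁ with equal underlying values are equal
  have hext1 : ∀ φ₁ φ₂ : G₁ ≃g G₁, (∀ u : U, (↑(φ₁ u) : V) = ↑(φ₂ u)) → φ₁ = φ₂ := by
    intro φ₁ φ₂ h
    exact RelIso.ext fun u => Subtype.ext (h u)
  -- the restriction map
  let F : (G ≃g G) → (G₁ ≃g G₁) := fun ψ => (hatt.restricts_aut ψ (hstab ψ)).choose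
  have hF : ∀ (ψ : G ≃g G) (u : U), (↑(F ψ u) : V) = ψ ↑u :=
    fun ψ => (hatt.restricts_aut ψ (hstab ψ)).choose_spec
  have hmul : ∀ ψ₁ ψ₂ : G ≃g G, F (ψ₁ * ψ₂) = F ψ₁ * F ψ₂ := by
    intro ψ₁ ψ₂
    apply hext1
    intro u
    have : ((F ψ₁ * F ψ₂) u : V) = ↑(F ψ₁ (F ψ₂ u)) := rfl
    rw [hF, this, hF ψ₁, hF ψ₂]
    rfl
  let Fhom : (G ≃g G) →* (G₁ ≃g G₁) :=
    { toFun := F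
      map_one' := by
        apply hext1
        intro u
        rw [hF]
        rfl
      map_mul' := hmul }
  have hinj : Function.Injective Fhom := by
    intro ψ₁ ψ₂ h
    apply hext ψ₁ ψ₂
    intro u hu
    have h1 := hF ψ₁ ⟨u, hu⟩
    have h2 := hF ψ₂ ⟨u, hu⟩
    rw [← h1, ← h2]
    exact congrArg (fun φ => ((φ ⟨u, hu⟩ : U) : V)) h
  have hsurj : Function.Surjective Fhom := by
    intro φ
    obtain ⟨ψ, hψ⟩ := hatt.extends_aut φ
    refine ⟨ψ, hext1 _ _ fun u => ?_⟩
    show (↑(F ψ u) : V) = ↑(φ u)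
    rw [hF, hψ]
  exact ⟨MulEquiv.ofBijective Fhom ⟨hinj, hsurj⟩⟩
end

section
/- Let G be a connected bipartite vd-graph with parts U and W (U nonempty), and let G₁ be an attached graph to G with vertex set U. Suppose t is an automorphism of G of order 2 with t(U) = W. Then the stabilizer S(U) = {f ∈ Aut(G) : f(U) = U} is a normal subgroup of Aut(G), every element of Aut(G) is a product of an element of S(U) and a power of t, and S(U) ∩ ⟨t⟩ = 1; consequently Aut(G) is the internal semidirect product S(U) ⋊ ⟨t⟩ ≅ Aut(G₁) ⋊ ℤ₂. -/
open SimpleGraph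

/-- Let `G` be a connected bipartite vd-graph with parts `U` and `W`
(`U` nonempty), let `G₁` be an attached graph to `G` on `U`, and let `t` be an
automorphism of `G` of order 2 with `t(U) = W`.  Then the stabilizer
`S(U) = {f ∈ Aut(G) : f(U) = U}` is a normal subgroup of `Aut(G)`, every element of
`Aut(G)` is a product of an element of `S(U)` and a power of `t`, and `S(U) ∩ ⟨t⟩ = 1`;
consequently `Aut(G)` is the internal semidirect product `S(U) ⋊ ⟨t⟩ ≅ Aut(G₁) ⋊ ℤ₂`. -/
theorem stmt_6 {V : Type*} (G : SimpleGraph V) (U W : Set V) (hU : U.Nonempty)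
    (hcover : U ∪ W = Set.univ) (hdisj : U ∩ W = ∅)
    (hbip : ∀ v w : V, G.Adj v w → (v ∈ U ∧ w ∈ W) ∨ (v ∈ W ∧ w ∈ U))
    (hconn : G.Connected)
    (hvd : ∀ v w : V, G.neighborSet v = G.neighborSet w → v = w)
    (G₁ : SimpleGraph U) (hatt : IsAttached G U G₁)
    (t : G ≃g G) (ht2 : orderOf t = 2) (htU : ⇑t '' U = W) :
    ∃ S : Subgroup (G ≃g G),
      (S : Set (G ≃g G)) = {f : G ≃g G | ⇑f '' U = U} ∧
      S.Normal ∧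
      (∀ f : G ≃g G, ∃ s ∈ S, ∃ m : ℤ, f = s * t ^ m) ∧
      S ⊓ Subgroup.zpowers t = ⊥ ∧
      ∃ φ : Multiplicative (ZMod 2) →* MulAut (G₁ ≃g G₁),
        Nonempty ((G ≃g G) ≃* (G₁ ≃g G₁) ⋊[φ] Multiplicative (ZMod 2)) := by
  classical
  -- `W` is the complement of `U`
  have hW : W = Uᶜ := by
    ext x
    constructor
    · intro hx hxU
      have : x ∈ U ∩ W := ⟨hxU, hx⟩
      rw [hdisj] at this
      exact this
    · intro hx
      have : x ∈ U ∪ W := by rw [hcover]; exact Set.mem_univ x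
      rcases this with h | h
      · exact absurd h hx
      · exact h
  obtain ⟨u₀, hu₀⟩ := hU
  have hUW : U ≠ W := by
    intro h
    rw [hW] at h
    exact (h ▸ hu₀) hu₀
  -- adjacency flips membership in `U`
  have hadj : ∀ v w : V, G.Adj v w → (v ∈ U ↔ w ∉ U) := by
    intro v w h
    rcases hbip v w h with ⟨hv, hw⟩ | ⟨hv, hw⟩
    · rw [hW] at hw; tauto
    · rw [hW] at hv; tauto
  -- parity along walks
  have hwalk : ∀ {v w : V} (p : G.Walk v w), ((v ∈ U) ↔ (w ∈ U)) ↔ Even p.length := by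
    intro v w p
    induction p with
    | nil => simp
    | cons h p ih =>
      have hab := hadj _ _ h
      rw [SimpleGraph.Walk.length_cons, Nat.even_add_one, ← ih]
      tauto
  -- automorphisms preserve the "same part" relation
  have hpres : ∀ (f : G ≃g G) (v w : V), ((f v ∈ U) ↔ (f w ∈ U)) ↔ ((v ∈ U) ↔ (w ∈ U)) := by
    intro f v w
    obtain ⟨p⟩ := hconn.preconnected v w
    have h2 := hwalk (p.map f.toHom)
    rw [SimpleGraph.Walk.length_map] at h2
    rw [hwalk p]
    exact h2
  -- membership in images
  have himg : ∀ (f : G ≃g G) (A : Set V) (x : V), x ∈ ⇑f '' A ↔ f.symm x ∈ A := by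
    intro f A x
    constructor
    · rintro ⟨a, ha, rfl⟩
      simpa using ha
    · intro h
      exact ⟨f.symm x, h, f.apply_symm_apply x⟩
  -- every automorphism maps `U` onto `U` or onto `W`
  have hL : ∀ f : G ≃g G, ⇑f '' U = U ∨ ⇑f '' U = W := by
    intro f
    by_cases h0 : f u₀ ∈ U
    · left
      ext x
      rw [himg]
      have h1 := hpres f (f.symm x) u₀
      rw [f.apply_symm_apply] at h1
      tauto
    · right
      ext x
      rw [himg, hW, Set.mem_compl_iff]
      have h1 := hpres f (f.symm x) u₀
      rw [f.apply_symm_apply] at h1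
      tauto
  -- the subgroup S
  have himg_mul : ∀ (a b : G ≃g G) (A : Set V), ⇑(a * b) '' A = ⇑a '' (⇑b '' A) := by
    intro a b A
    rw [RelIso.coe_mul, Set.image_comp]
  have hinv_img : ∀ g : G ≃g G, ⇑g '' (⇑g⁻¹ '' U) = U := by
    intro g
    rw [← himg_mul, mul_inv_cancel, RelIso.coe_one, Set.image_id]
  let S : Subgroup (G ≃g G) :=
    { carrier := {f : G ≃g G | ⇑f '' U = U}
      one_mem' := by
        simp only [Set.mem_setOf_eq, RelIso.coe_one, Set.image_id]
      mul_mem' := by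
        intro a b ha hb
        simp only [Set.mem_setOf_eq] at ha hb ⊢
        rw [himg_mul, hb, ha]
      inv_mem' := by
        intro a ha
        simp only [Set.mem_setOf_eq] at ha ⊢
        have h1 := hinv_img a⁻¹
        rwa [inv_inv, ha] at h1 }
  have hmemS : ∀ f : G ≃g G, f ∈ S ↔ ⇑f '' U = U := fun _ => Iff.rfl
  -- image of complement
  have hcompl : ∀ f : G ≃g G, ⇑f '' Uᶜ = (⇑f '' U)ᶜ := by
    intro f
    ext x
    rw [himg, Set.mem_compl_iff, Set.mem_compl_iff, himg]
  -- normality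
  have hSnormal : S.Normal := by
    constructor
    intro n hn g
    have hn' : ⇑n '' U = U := hn
    rw [hmemS]
    rcases hL g⁻¹ with h | h
    · have hg : ⇑g '' U = U := by
        have h1 := hinv_img g
        rwa [h] at h1
      rw [himg_mul, himg_mul, h, hn', hg]
    · have hnW : ⇑n '' W = W := by
        rw [hW, hcompl, hn']
      have hg : ⇑g '' W = U := by
        have h1 := hinv_img g
        rwa [h] at h1
      rw [himg_mul, himg_mul, h, hnW, hg]
  -- order-two facts about t
  have ht2' : t * t = 1 := by
    have h1 := pow_orderOf_eq_one t
    rwa [ht2, pow_two] at h1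
  have hz2 : t ^ (2 : ℕ) = 1 := by rw [pow_two]; exact ht2'
  have htW : ⇑t '' W = U := by
    have h1 : ⇑t '' (⇑t '' U) = U := by
      rw [← himg_mul, ht2', RelIso.coe_one, Set.image_id]
    rwa [htU] at h1
  have htnotS : t ∉ S := by
    intro h
    have h1 : ⇑t '' U = U := h
    rw [htU] at h1
    exact hUW h1.symm
  -- decomposition
  have hdecomp0 : ∀ f : G ≃g G, (f ∈ S) ∨ (f * t ∈ S ∧ f = (f * t) * t) := by
    intro f
    rcases hL f with h | h
    · exact Or.inl h
    · refine Or.inr ⟨?_, ?_⟩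
      · rw [hmemS, himg_mul, htU, hW, hcompl, h, hW, compl_compl]
      · rw [mul_assoc, ht2', mul_one]
  have hdec : ∀ f : G ≃g G, ∃ s ∈ S, ∃ m : ℤ, f = s * t ^ m := by
    intro f
    rcases hdecomp0 f with h | ⟨h1, h2⟩
    · exact ⟨f, h, 0, by rw [zpow_zero, mul_one]⟩
    · exact ⟨f * t, h1, 1, by rw [zpow_one]; exact h2⟩
  -- trivial intersection
  have htz2 : t ^ (2 : ℤ) = 1 := by
    rw [show (2 : ℤ) = ((2 : ℕ) : ℤ) from rfl, zpow_natCast, hz2]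
  have hinter : S ⊓ Subgroup.zpowers t = ⊥ := by
    rw [eq_bot_iff]
    intro x hx
    obtain ⟨hxS, hxz⟩ := Subgroup.mem_inf.mp hx
    obtain ⟨m, rfl⟩ := Subgroup.mem_zpowers_iff.mp hxz
    rw [Subgroup.mem_bot]
    rcases Int.even_or_odd m with ⟨k, hk⟩ | ⟨k, hk⟩
    · rw [hk, show k + k = 2 * k from (two_mul k).symm, zpow_mul, htz2, one_zpow]
    · exfalso
      apply htnotS
      have hxt : t ^ m = t := by
        rw [hk, zpow_add, zpow_mul, htz2, one_zpow, one_mul, zpow_one]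
      rwa [hxt] at hxS
  -- the restriction isomorphism S ≃* Aut G₁
  have hres : ∀ f : S, ∃ φ : G₁ ≃g G₁, ∀ u : U, (↑(φ u) : V) = f.1 ↑u :=
    fun f => hatt.restricts_aut f.1 f.2
  let e0 : S → (G₁ ≃g G₁) := fun f => (hres f).choose
  have he0 : ∀ (f : S) (u : U), (↑(e0 f u) : V) = f.1 ↑u := fun f => (hres f).choose_spec
  have hNext : ∀ a b : G₁ ≃g G₁, (∀ u : U, (↑(a u) : V) = ↑(b u)) → a = b :=
    fun a b h => RelIso.ext fun u => Subtype.ext (h u)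
  have he0mul : ∀ a b : S, e0 (a * b) = e0 a * e0 b := by
    intro a b
    apply hNext
    intro u
    show (↑(e0 (a * b) u) : V) = ↑(e0 a (e0 b u))
    rw [he0, he0, he0]
    rfl
  -- pointwise-fixing automorphisms are trivial (vd-property)
  have hfix : ∀ h : G ≃g G, (∀ u : V, u ∈ U → h u = u) → h = 1 := by
    intro h hh
    apply RelIso.ext
    intro v
    show h v = v
    by_cases hv : v ∈ U
    · exact hh v hv
    · have hNv : G.neighborSet v ⊆ U := by
        intro x hx
        rcases hbip v x hx with ⟨h1, _⟩ | ⟨_, h2⟩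
        · exact absurd h1 hv
        · exact h2
      apply hvd
      ext x
      simp only [SimpleGraph.mem_neighborSet]
      constructor
      · intro hx
        have hax : G.Adj (h v) (h (h.symm x)) := by rwa [h.apply_symm_apply]
        have hax2 : G.Adj v (h.symm x) := h.map_rel_iff.mp hax
        have hxU : h.symm x ∈ U := hNv hax2
        have hfix2 := hh _ hxU
        rw [h.apply_symm_apply] at hfix2
        rwa [hfix2]
      · intro hx
        have hxU : x ∈ U := hNv hx
        have hx2 : h x = x := hh x hxU
        rw [← hx2]
        exact h.map_rel_iff.mpr hx
  have he0inj : Function.Injective e0 := by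
    intro a b hab
    have hfix1 : ∀ u : V, u ∈ U → (b.1⁻¹ * a.1) u = u := by
      intro u hu
      have h1 := he0 a ⟨u, hu⟩
      rw [hab, he0 b ⟨u, hu⟩] at h1
      show b.1⁻¹ (a.1 u) = u
      rw [← h1]
      exact b.1.symm_apply_apply u
    have h2 := hfix _ hfix1
    have h3 : a.1 = b.1 := by
      have := inv_mul_eq_one.mp h2
      exact this.symm
    exact Subtype.ext h3
  have he0surj : Function.Surjective e0 := by
    intro φ₁
    obtain ⟨ψ, hψ⟩ := hatt.extends_aut φ₁
    have hψS : ψ ∈ S := by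
      rcases hL ψ with h | h
      · exact h
      · exfalso
        have h1 : ψ ↑(⟨u₀, hu₀⟩ : U) ∈ ⇑ψ '' U := Set.mem_image_of_mem _ hu₀
        rw [h] at h1
        rw [hψ] at h1
        rw [hW] at h1
        exact h1 (φ₁ ⟨u₀, hu₀⟩).2
    refine ⟨⟨ψ, hψS⟩, hNext _ _ fun u => ?_⟩
    rw [he0]
    exact hψ u
  let ehom : S →* (G₁ ≃g G₁) := MonoidHom.mk' e0 he0mul
  let e : S ≃* (G₁ ≃g G₁) := MulEquiv.ofBijective ehom ⟨he0inj, he0surj⟩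
  haveI : S.Normal := hSnormal
  -- the homomorphism ZMod 2 → Aut G
  let tp : Multiplicative (ZMod 2) → (G ≃g G) := fun x => t ^ (Multiplicative.toAdd x).val
  have htpmul : ∀ a b, tp (a * b) = tp a * tp b := by
    intro a b
    show t ^ ((Multiplicative.toAdd a + Multiplicative.toAdd b)).val
      = t ^ (Multiplicative.toAdd a).val * t ^ (Multiplicative.toAdd b).val
    generalize Multiplicative.toAdd a = x
    generalize Multiplicative.toAdd b = y
    have h1 : ∀ x y : ZMod 2,
        (x + y).val = x.val + y.val ∨ (x + y).val + 2 = x.val + y.val := by decide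
    rcases h1 x y with h | h
    · rw [h, pow_add]
    · rw [← pow_add, ← h, pow_add, hz2, mul_one]
  let tpow : Multiplicative (ZMod 2) →* (G ≃g G) := MonoidHom.mk' tp htpmul
  let f₁ : (G₁ ≃g G₁) →* (G ≃g G) := S.subtype.comp e.symm.toMonoidHom
  let φh : Multiplicative (ZMod 2) →* MulAut (G₁ ≃g G₁) :=
    (MulAut.congr e).toMonoidHom.comp (MulAut.conjNormal.comp tpow)
  have hcompat : ∀ h, f₁.comp ((φh h).toMonoidHom)
      = (MulAut.conj (tpow h)).toMonoidHom.comp f₁ := by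
    intro h
    apply MonoidHom.ext
    intro n
    show (↑(e.symm ((φh h) n)) : G ≃g G) = tpow h * ↑(e.symm n) * (tpow h)⁻¹
    have h1 : (φh h) n = e ((MulAut.conjNormal (tpow h)) (e.symm n)) := rfl
    rw [h1, e.symm_apply_apply]
    exact MulAut.conjNormal_apply (tpow h) (e.symm n)
  let Θ := SemidirectProduct.lift f₁ tpow hcompat
  have hΘinj : Function.Injective Θ := by
    rw [injective_iff_map_eq_one]
    rintro ⟨x1, x2⟩ hx
    have hx' : (↑(e.symm x1) : G ≃g G) * t ^ (Multiplicative.toAdd x2).val = 1 := hx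
    have hcases : Multiplicative.toAdd x2 = 0 ∨ Multiplicative.toAdd x2 = 1 := by
      generalize Multiplicative.toAdd x2 = z
      revert z
      decide
    rcases hcases with h | h
    · rw [h] at hx'
      rw [show ((0 : ZMod 2)).val = 0 from rfl, pow_zero, mul_one] at hx'
      have h1 : e.symm x1 = 1 := Subtype.ext hx'
      have h2 : x1 = 1 := by
        have h3 := congrArg e h1
        rwa [e.apply_symm_apply, map_one] at h3
      have h3 : x2 = 1 := by
        have h4 := congrArg Multiplicative.ofAdd h
        rwa [ofAdd_toAdd, ofAdd_zero] at h4
      rw [h2, h3]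
      rfl
    · exfalso
      rw [h, show ((1 : ZMod 2)).val = 1 from rfl, pow_one] at hx'
      apply htnotS
      have h1 : t = (↑(e.symm x1) : G ≃g G)⁻¹ := eq_inv_of_mul_eq_one_right hx'
      rw [h1]
      exact S.inv_mem (e.symm x1).2
  have hΘsurj : Function.Surjective Θ := by
    intro a
    rcases hdecomp0 a with h | ⟨h1, h2⟩
    · refine ⟨⟨e ⟨a, h⟩, 1⟩, ?_⟩
      show (↑(e.symm (e ⟨a, h⟩)) : G ≃g G)
        * t ^ (Multiplicative.toAdd (1 : Multiplicative (ZMod 2))).val = a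
      rw [e.symm_apply_apply, toAdd_one, show ((0 : ZMod 2)).val = 0 from rfl, pow_zero, mul_one]
    · refine ⟨⟨e ⟨a * t, h1⟩, Multiplicative.ofAdd 1⟩, ?_⟩
      show (↑(e.symm (e ⟨a * t, h1⟩)) : G ≃g G)
        * t ^ (Multiplicative.toAdd (Multiplicative.ofAdd (1 : ZMod 2))).val = a
      rw [e.symm_apply_apply, toAdd_ofAdd, show ((1 : ZMod 2)).val = 1 from rfl, pow_one,
        mul_assoc, ht2', mul_one]
  exact ⟨S, rfl, hSnormal, hdec, hinter, φh,
    ⟨(MulEquiv.ofBijective Θ ⟨hΘinj, hΘsurj⟩).symm⟩⟩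
end

section
/- Let n, k, l be integers with 1 ≤ k < l ≤ n−1 and k + l ≤ n. If n ≠ k + l, then the automorphism group of the set-inclusion graph G(n,k,l) is isomorphic to the symmetric group Sym([n]) on n letters. -/
/-!
If `k + l < n`, a `k`-set has more neighbours than an `l`-set, so every automorphism `e` of
`G(n,k,l)` preserves both levels. Two `k`-sets meet in `k - 1` points exactly when they have
`C(n-k-1, l-k-1)` common neighbours (the `l`-supersets of their union), so `e` acts on the
`k`-sets as an automorphism of the Johnson graph `J(n, k)`.

For `2k < n` every automorphism `f` of `J(n, k)` comes from a permutation of `[n]`, by induction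
on `k`. The images of the `k`-sets through a `(k-1)`-set `S` form a clique of `n - k + 1 > k + 1`
members, too many to fit inside one `(k+1)`-set, and a Johnson clique that does not fit in the
union of two of its members contains their intersection. So these images share a `(k-1)`-set,
and sending `S` to it is an automorphism of `J(n, k-1)`, induced by some `σ` by induction; then
`f` is induced by `σ` as well, since a `k`-set is the union of its `(k-1)`-subsets.

Finally an `l`-set contains exactly the images of its `k`-subsets, so `e` is induced by `σ`
everywhere, and different permutations move some `k`-set differently.
-/

open SimpleGraph

/-- The set-inclusion graph `G(n,k,l)`: vertices are all `k`-element subsets and all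
`l`-element subsets of `[n]`, two distinct vertices being adjacent iff one is contained
in the other. -/
def setInclusionGraph (n k l : ℕ) :
    SimpleGraph {s : Finset (Fin n) // s.card = k ∨ s.card = l} where
  Adj v w := v.1 ⊂ w.1 ∨ w.1 ⊂ v.1
  symm := ⟨by intro v w h; tauto⟩
  loopless := ⟨by intro v h; rcases h with h | h <;> exact h.ne rfl⟩

open Finset

lemma Nat.choose_lt_choose {a b r : ℕ} (hab : a < b) (hr : 0 < r) (hrb : r ≤ b) :
    a.choose r < b.choose r := by
  obtain ⟨b, rfl⟩ : ∃ b', b = b' + 1 := ⟨b - 1, by omega⟩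
  obtain ⟨r, rfl⟩ : ∃ r', r = r' + 1 := ⟨r - 1, by omega⟩
  have h_mono := Nat.choose_le_choose (r + 1) (show a ≤ b by omega)
  have h_pos := Nat.choose_pos (show r ≤ b by omega)
  rw [Nat.choose_succ_succ']
  omega

namespace Finset

variable {α : Type*} [DecidableEq α] {k : ℕ} {S P Q : Finset α} {a b : α}

lemma insert_inter_insert_of_ne (hab : a ≠ b) : insert a S ∩ insert b S = S := by
  ext x
  simp only [mem_inter, mem_insert]
  grind

lemma card_insert_of_card_eq (hS : #S = k) (ha : a ∉ S) : #(insert a S) = k + 1 := by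
  rw [card_insert_of_notMem ha, hS]

lemma lt_card_union_of_ne (hP : #P = k) (hQ : #Q = k) (hPQ : P ≠ Q) : k < #(P ∪ Q) := by
  by_contra! h
  have hP' := eq_of_subset_of_card_le subset_union_left (hP ▸ h)
  have hQ' := eq_of_subset_of_card_le subset_union_right (hQ ▸ h)
  exact hPQ (hP'.trans hQ'.symm)

lemma exists_ne_notMem [Fintype α] (hS : #S + 2 ≤ Fintype.card α) :
    ∃ a b, a ∉ S ∧ b ∉ S ∧ a ≠ b := by
  obtain ⟨a, ha, b, hb, hab⟩ := one_lt_card.1 (show 1 < #Sᶜ by rw [card_compl]; omega)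
  exact ⟨a, b, mem_compl.1 ha, mem_compl.1 hb, hab⟩

end Finset

lemma Equiv.Perm.eq_one_of_forall_map_eq {α : Type*} [Fintype α] [DecidableEq α] {k : ℕ}
    (hk : 1 ≤ k) (hkα : k < Fintype.card α) {σ : Equiv.Perm α}
    (hσ : ∀ S : Finset α, #S = k → S.map σ.toEmbedding = S) : σ = 1 := by
  ext i
  by_contra hi
  obtain ⟨S, hiS, hSi, hS⟩ := exists_subsuperset_card_eq (s := {i}) (t := univ.erase (σ i))
    (singleton_subset_iff.2 (mem_erase.2 ⟨Ne.symm hi, mem_univ i⟩)) (by simpa using hk)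
    (by rw [card_erase_of_mem (mem_univ _), card_univ]; omega)
  have h_mem : σ i ∈ S := hσ S hS ▸ mem_map_of_mem σ.toEmbedding (singleton_subset_iff.1 hiS)
  exact (mem_erase.1 (hSi h_mem)).1 rfl

lemma SimpleGraph.Iso.card_neighborFinset_inter {V W : Type*} {G : SimpleGraph V}
    {G' : SimpleGraph W} [Fintype V] [Fintype W] [DecidableEq V] [DecidableEq W]
    [DecidableRel G.Adj] [DecidableRel G'.Adj] (e : G ≃g G') (v w : V) :
    #(G'.neighborFinset (e v) ∩ G'.neighborFinset (e w)) =
      #(G.neighborFinset v ∩ G.neighborFinset w) :=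
  (card_equiv e.toEquiv fun u => by simp [mem_neighborFinset, e.map_adj_iff]).symm

section Johnson

variable {α : Type*} [DecidableEq α]

/-- The Johnson graph `J(α, K)`, placed on all of `Finset α`: sets of size other than `K` are
isolated. -/
def johnsonGraph (K : ℕ) : SimpleGraph (Finset α) where
  Adj A B := #A = K ∧ #B = K ∧ #(A ∩ B) + 1 = K
  symm := ⟨fun A B h => ⟨h.2.1, h.1, inter_comm A B ▸ h.2.2⟩⟩
  loopless := ⟨fun A h => by have := h.2.2; rw [inter_self, h.1] at this; omega⟩

variable {K k : ℕ} {A B P Q S X Y Z W : Finset α} {a b c : α}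

@[simp]
lemma johnsonGraph_adj : (johnsonGraph K).Adj A B ↔ #A = K ∧ #B = K ∧ #(A ∩ B) + 1 = K :=
  Iff.rfl

lemma johnsonGraph_adj_iff_card_union (hA : #A = K) (hB : #B = K) :
    (johnsonGraph K).Adj A B ↔ #(A ∪ B) = K + 1 := by
  have := card_union_add_card_inter A B
  simp only [johnsonGraph_adj, hA, hB, true_and]
  omega

lemma johnsonGraph_adj_of_subset (hP : #P = K) (hQ : #Q = K) (hPQ : P ≠ Q) (hA : #A = K + 1)
    (hPA : P ⊆ A) (hQA : Q ⊆ A) : (johnsonGraph K).Adj P Q := by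
  have := card_le_card (union_subset hPA hQA)
  have := lt_card_union_of_ne hP hQ hPQ
  rw [johnsonGraph_adj_iff_card_union hP hQ]
  omega

lemma johnsonGraph_adj_insert (hS : #S = k) (ha : a ∉ S) (hb : b ∉ S) (hab : a ≠ b) :
    (johnsonGraph (k + 1)).Adj (insert a S) (insert b S) := by
  simp [card_insert_of_card_eq hS, insert_inter_insert_of_ne hab, ha, hb, hS]

lemma inter_subset_or_subset_union (hXY : (johnsonGraph K).Adj X Y)
    (hXZ : (johnsonGraph K).Adj X Z) (hYZ : (johnsonGraph K).Adj Y Z) :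
    X ∩ Y ⊆ Z ∨ Z ⊆ X ∪ Y := by
  rw [or_iff_not_imp_left]
  intro h
  obtain ⟨x, hxXY, hxZ⟩ := not_subset.1 h
  obtain ⟨-, -, hXY⟩ := hXY
  obtain ⟨-, -, hXZ⟩ := hXZ
  obtain ⟨-, hZ, hYZ⟩ := hYZ
  -- `Z ∩ X` and `Z ∩ Y` have `K - 1` elements each and share at most `K - 2` (not `x`),
  -- so together they cover `Z`
  have h_triple : Z ∩ X ∩ (Z ∩ Y) ⊆ (X ∩ Y).erase x := by
    intro y
    simp only [mem_inter, mem_erase]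
    rintro ⟨⟨hyZ, hyX⟩, -, hyY⟩
    exact ⟨fun hyx => hxZ (hyx ▸ hyZ), hyX, hyY⟩
  have h_le := card_le_card h_triple
  rw [card_erase_of_mem hxXY] at h_le
  have h_pos := card_pos.2 ⟨x, hxXY⟩
  have h_union := card_union_add_card_inter (Z ∩ X) (Z ∩ Y)
  rw [← inter_union_distrib_left] at h_union
  rw [inter_comm] at hXZ hYZ
  have h_eq : Z ∩ (X ∪ Y) = Z := eq_of_subset_of_card_le inter_subset_left (by omega)
  exact h_eq ▸ inter_subset_right

lemma inter_subset_of_isClique {𝒞 : Set (Finset α)} (h𝒞 : (johnsonGraph K).IsClique 𝒞)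
    (hX : X ∈ 𝒞) (hY : Y ∈ 𝒞) (hXY : X ≠ Y) (hZ : Z ∈ 𝒞) (hZXY : ¬Z ⊆ X ∪ Y)
    (hW : W ∈ 𝒞) :
    X ∩ Y ⊆ W := by
  have hZX : Z ≠ X := by rintro rfl; exact hZXY subset_union_left
  have hZY : Z ≠ Y := by rintro rfl; exact hZXY subset_union_right
  have hXYZ : X ∩ Y ⊆ Z := (inter_subset_or_subset_union (h𝒞 hX hY hXY)
    (h𝒞 hX hZ hZX.symm) (h𝒞 hY hZ hZY.symm)).resolve_right hZXY
  by_contra hXYW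
  have hWX : W ≠ X := by rintro rfl; exact hXYW inter_subset_left
  have hWY : W ≠ Y := by rintro rfl; exact hXYW inter_subset_right
  have hWZ : W ≠ Z := by rintro rfl; exact hXYW hXYZ
  have hWXY := (inter_subset_or_subset_union (h𝒞 hX hY hXY) (h𝒞 hX hW hWX.symm)
    (h𝒞 hY hW hWY.symm)).resolve_left hXYW
  have hWXZ := (inter_subset_or_subset_union (h𝒞 hX hZ hZX.symm) (h𝒞 hX hW hWX.symm)
    (h𝒞 hZ hW hWZ.symm)).resolve_left
      fun h => hXYW ((subset_inter inter_subset_left hXYZ).trans h)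
  have hYZ : Y ∩ Z = X ∩ Y := by
    have hY' := h𝒞 hY hZ hZY.symm
    have hX' := h𝒞 hX hY hXY
    simp only [johnsonGraph_adj] at hX' hY'
    exact (eq_of_subset_of_card_le (subset_inter inter_subset_right hXYZ) (by omega)).symm
  -- `W ⊆ (X ∪ Y) ∩ (X ∪ Z) = X ∪ (Y ∩ Z) = X`
  have hWX' : W ⊆ X := by
    intro w hw
    by_contra hwX
    have hwYZ : w ∈ Y ∩ Z := mem_inter.2
      ⟨(mem_union.1 (hWXY hw)).resolve_left hwX, (mem_union.1 (hWXZ hw)).resolve_left hwX⟩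
    exact hwX (inter_subset_left (hYZ ▸ hwYZ))
  have hW' := h𝒞 hX hW hWX.symm
  simp only [johnsonGraph_adj] at hW'
  exact hWX (eq_of_subset_of_card_le hWX' (by omega))

/-- On `K`-sets, `f` acts as an automorphism of `J(α, K)`. -/
structure IsJohnsonMap (K : ℕ) (f : Finset α → Finset α) : Prop where
  mapsTo : Set.MapsTo f {A | #A = K} {A | #A = K}
  injOn : Set.InjOn f {A | #A = K}
  adj_iff : ∀ ⦃A B⦄, #A = K → #B = K →
    ((johnsonGraph K).Adj (f A) (f B) ↔ (johnsonGraph K).Adj A B)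

variable [Fintype α]

/-- When `f` is induced by a permutation `σ` this is `S.image σ`: it is how the action descends
from `(K + 1)`-sets to `K`-sets. -/
def starInf (f : Finset α → Finset α) (S : Finset α) : Finset α :=
  Sᶜ.inf fun a => f (insert a S)

lemma starInf_subset {f : Finset α → Finset α} (ha : a ∉ S) :
    starInf f S ⊆ f (insert a S) :=
  inf_le (mem_compl.2 ha)

namespace IsJohnsonMap

variable {f : Finset α → Finset α}

lemma injOn_insert (hf : IsJohnsonMap (k + 1) f) (hS : #S = k) :
    Set.InjOn (fun a => f (insert a S)) (Sᶜ : Finset α) := by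
  intro a ha b hb hab
  have ha' := mem_compl.1 ha
  exact (insert_inj ha').1 (hf.injOn (card_insert_of_card_eq hS ha')
    (card_insert_of_card_eq hS (mem_compl.1 hb)) hab)

/-- The images of the `(k + 1)`-sets through a `k`-set `S` form a clique with more than `k + 2`
members, so they cannot all lie in one `(k + 2)`-set. -/
lemma inter_subset_apply_insert (hf : IsJohnsonMap (k + 1) f)
    (hn : 2 * (k + 1) < Fintype.card α) (hS : #S = k) (ha : a ∉ S) (hb : b ∉ S) (hab : a ≠ b)
    (hc : c ∉ S) : f (insert a S) ∩ f (insert b S) ⊆ f (insert c S) := by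
  set 𝒞 := Sᶜ.image fun d => f (insert d S)
  have h𝒞 : (johnsonGraph (k + 1)).IsClique (𝒞 : Set (Finset α)) := by
    simp only [𝒞, coe_image]
    rintro _ ⟨d, hd, rfl⟩ _ ⟨e, he, rfl⟩ hde
    have hd' := mem_compl.1 hd
    have he' := mem_compl.1 he
    exact (hf.adj_iff (card_insert_of_card_eq hS hd') (card_insert_of_card_eq hS he')).2
      (johnsonGraph_adj_insert hS hd' he' fun h => hde (h ▸ rfl))
  have hXY : (johnsonGraph (k + 1)).Adj (f (insert a S)) (f (insert b S)) :=
    (hf.adj_iff (card_insert_of_card_eq hS ha) (card_insert_of_card_eq hS hb)).2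
      (johnsonGraph_adj_insert hS ha hb hab)
  obtain ⟨Z, hZ, hZXY⟩ : ∃ Z ∈ 𝒞, ¬Z ⊆ f (insert a S) ∪ f (insert b S) := by
    by_contra! h
    have h_sub : 𝒞 ⊆ (f (insert a S) ∪ f (insert b S)).powersetCard (k + 1) := by
      intro Z hZ
      obtain ⟨d, hd, rfl⟩ := mem_image.1 hZ
      exact mem_powersetCard.2 ⟨h _ hZ, hf.mapsTo (card_insert_of_card_eq hS (mem_compl.1 hd))⟩
    have h_card := card_le_card h_sub
    rw [card_image_of_injOn (hf.injOn_insert hS), card_powersetCard, card_compl, hS,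
      (johnsonGraph_adj_iff_card_union hXY.1 hXY.2.1).1 hXY, Nat.choose_succ_self_right] at h_card
    omega
  exact inter_subset_of_isClique h𝒞 (mem_image_of_mem _ (mem_compl.2 ha))
    (mem_image_of_mem _ (mem_compl.2 hb)) hXY.ne hZ hZXY (mem_image_of_mem _ (mem_compl.2 hc))

lemma starInf_eq_inter (hf : IsJohnsonMap (k + 1) f) (hn : 2 * (k + 1) < Fintype.card α)
    (hS : #S = k) (ha : a ∉ S) (hb : b ∉ S) (hab : a ≠ b) :
    starInf f S = f (insert a S) ∩ f (insert b S) :=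
  le_antisymm (le_inf (starInf_subset ha) (starInf_subset hb))
    (Finset.le_inf fun _ hc => hf.inter_subset_apply_insert hn hS ha hb hab (mem_compl.1 hc))

lemma card_starInf (hf : IsJohnsonMap (k + 1) f) (hn : 2 * (k + 1) < Fintype.card α)
    (hS : #S = k) : #(starInf f S) = k := by
  obtain ⟨a, b, ha, hb, hab⟩ := exists_ne_notMem (S := S) (by omega)
  have hXY := (hf.adj_iff (card_insert_of_card_eq hS ha) (card_insert_of_card_eq hS hb)).2
    (johnsonGraph_adj_insert hS ha hb hab)
  rw [hf.starInf_eq_inter hn hS ha hb hab]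
  exact Nat.add_right_cancel hXY.2.2

/-- `f` maps the star of `S` onto the star of `starInf f S`: both have `#Sᶜ` members. -/
lemma image_apply_insert (hf : IsJohnsonMap (k + 1) f) (hn : 2 * (k + 1) < Fintype.card α)
    (hS : #S = k) :
    Sᶜ.image (fun a => f (insert a S)) =
      {B ∈ powersetCard (k + 1) (univ : Finset α) | starInf f S ⊆ B} := by
  have h_core := hf.card_starInf hn hS
  refine eq_of_subset_of_card_le ?_ ?_
  · intro B hB
    obtain ⟨a, ha, rfl⟩ := mem_image.1 hB
    have ha' := mem_compl.1 ha
    simp only [mem_filter, mem_powersetCard_univ]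
    exact ⟨hf.mapsTo (card_insert_of_card_eq hS ha'), starInf_subset ha'⟩
  · rw [card_filter_powersetCard_subset _ _ _ (subset_univ _) (by omega),
      card_image_of_injOn (hf.injOn_insert hS), card_compl, card_univ, h_core, hS,
      Nat.add_sub_cancel_left, Nat.choose_one_right]

lemma starInf_subset_iff (hf : IsJohnsonMap (k + 1) f) (hn : 2 * (k + 1) < Fintype.card α)
    (hS : #S = k) (hA : #A = k + 1) : starInf f S ⊆ f A ↔ S ⊆ A := by
  constructor
  · intro h
    have h_mem : f A ∈ Sᶜ.image fun a => f (insert a S) := by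
      rw [hf.image_apply_insert hn hS]
      simp only [mem_filter, mem_powersetCard_univ]
      exact ⟨hf.mapsTo hA, h⟩
    obtain ⟨a, ha, hfa⟩ := mem_image.1 h_mem
    rw [← hf.injOn (card_insert_of_card_eq hS (mem_compl.1 ha)) hA hfa]
    exact subset_insert a S
  · intro h
    obtain ⟨a, ha, rfl⟩ := exists_eq_insert_iff.2 ⟨h, by omega⟩
    exact starInf_subset ha

lemma injOn_starInf (hf : IsJohnsonMap (k + 1) f) (hn : 2 * (k + 1) < Fintype.card α) :
    Set.InjOn (starInf f) {S | #S = k} := by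
  intro S (hS : #S = k) T (hT : #T = k) hST
  obtain ⟨a, b, ha, hb, hab⟩ := exists_ne_notMem (S := S) (by omega)
  have hT_sub : ∀ {c}, c ∉ S → T ⊆ insert c S := fun hc =>
    (hf.starInf_subset_iff hn hT (card_insert_of_card_eq hS hc)).1 (hST ▸ starInf_subset hc)
  have hTS : T ⊆ S :=
    (subset_inter (hT_sub ha) (hT_sub hb)).trans (insert_inter_insert_of_ne hab).le
  exact (eq_of_subset_of_card_le hTS (by rw [hS, hT])).symm

lemma _root_.isJohnsonMap_starInf (hf : IsJohnsonMap (k + 1) f)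
    (hn : 2 * (k + 1) < Fintype.card α) : IsJohnsonMap k (starInf f) where
  mapsTo _ hS := hf.card_starInf hn hS
  injOn := hf.injOn_starInf hn
  adj_iff S T hS hT := by
    have hgS := hf.card_starInf hn hS
    have hgT := hf.card_starInf hn hT
    constructor
    · intro h
      have h_mem : starInf f S ∪ starInf f T ∈ Sᶜ.image fun a => f (insert a S) := by
        rw [hf.image_apply_insert hn hS]
        simp only [mem_filter, mem_powersetCard_univ]
        exact ⟨(johnsonGraph_adj_iff_card_union hgS hgT).1 h, subset_union_left⟩
      obtain ⟨a, ha, hfa⟩ := mem_image.1 h_mem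
      have hA := card_insert_of_card_eq hS (mem_compl.1 ha)
      have hTA := (hf.starInf_subset_iff hn hT hA).1 (hfa ▸ subset_union_right)
      exact johnsonGraph_adj_of_subset hS hT (fun hST => h.ne (hST ▸ rfl)) hA (subset_insert a S)
        hTA
    · intro h
      have hA := (johnsonGraph_adj_iff_card_union hS hT).1 h
      exact johnsonGraph_adj_of_subset hgS hgT (fun hST => h.ne (hf.injOn_starInf hn hS hT hST))
        (hf.mapsTo hA) ((hf.starInf_subset_iff hn hS hA).2 subset_union_left)
        ((hf.starInf_subset_iff hn hT hA).2 subset_union_right)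

lemma apply_eq_image (hf : IsJohnsonMap (k + 1) f) (hk : 1 ≤ k) {σ : Equiv.Perm α}
    (hσ : ∀ S, #S = k → starInf f S = S.image σ) (hA : #A = k + 1) : f A = A.image σ := by
  refine (eq_of_subset_of_card_le ?_ ?_).symm
  · intro x hx
    obtain ⟨y, hy, rfl⟩ := mem_image.1 hx
    obtain ⟨z, hz, hzy⟩ := exists_mem_ne (show 1 < #A by omega) y
    have hAz : #(A.erase z) = k := by rw [card_erase_of_mem hz, hA, Nat.add_sub_cancel]
    have hσy : σ y ∈ starInf f (A.erase z) := by
      rw [hσ _ hAz]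
      exact mem_image_of_mem σ (mem_erase.2 ⟨hzy.symm, hy⟩)
    simpa only [insert_erase hz] using starInf_subset (notMem_erase z A) hσy
  · rw [card_image_of_injective _ σ.injective, hf.mapsTo hA, hA]

lemma exists_perm_of_one (hf : IsJohnsonMap 1 f) :
    ∃ σ : Equiv.Perm α, ∀ A, #A = 1 → f A = A.image σ := by
  have h_single : ∀ i, ∃ j, f {i} = {j} := fun i => card_eq_one.1 (hf.mapsTo (card_singleton i))
  choose t ht using h_single
  have ht_inj : Function.Injective t := fun i j hij =>
    singleton_inj.1 (hf.injOn (card_singleton i) (card_singleton j) (by rw [ht, ht, hij]))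
  refine ⟨Equiv.ofBijective t ht_inj.bijective_of_finite, fun A hA => ?_⟩
  obtain ⟨i, rfl⟩ := card_eq_one.1 hA
  simp [ht]

theorem exists_perm (hf : IsJohnsonMap K f) (hK : 1 ≤ K) (hn : 2 * K < Fintype.card α) :
    ∃ σ : Equiv.Perm α, ∀ A, #A = K → f A = A.image σ := by
  induction K, hK using Nat.le_induction generalizing f with
  | base => exact hf.exists_perm_of_one
  | succ k hk ih =>
    obtain ⟨σ, hσ⟩ := ih (isJohnsonMap_starInf hf hn) (by omega)
    exact ⟨σ, fun A hA => hf.apply_eq_image hk hσ hA⟩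

end IsJohnsonMap

end Johnson

instance {n k l : ℕ} : DecidableRel (setInclusionGraph n k l).Adj :=
  fun v w => inferInstanceAs (Decidable (v.1 ⊂ w.1 ∨ w.1 ⊂ v.1))

namespace setInclusionGraph

variable {n k l : ℕ} {v w : {s : Finset (Fin n) // #s = k ∨ #s = l}}

lemma adj_iff_of_card_eq_left (hkl : k < l) (hv : #v.1 = k) :
    (setInclusionGraph n k l).Adj v w ↔ #w.1 = l ∧ v.1 ⊆ w.1 := by
  change v.1 ⊂ w.1 ∨ w.1 ⊂ v.1 ↔ _
  constructor
  · rintro (h | h) <;> have := card_lt_card h <;> rcases w.2 with hw | hw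
    · omega
    · exact ⟨hw, h.subset⟩
    all_goals omega
  · rintro ⟨hw, h⟩
    exact .inl (h.ssubset_of_ne fun he => by rw [he] at hv; omega)

lemma adj_iff_of_card_eq_right (hkl : k < l) (hv : #v.1 = l) :
    (setInclusionGraph n k l).Adj v w ↔ #w.1 = k ∧ w.1 ⊆ v.1 := by
  rw [(setInclusionGraph n k l).adj_comm]
  constructor
  · intro h
    rcases w.2 with hw | hw
    · exact ⟨hw, ((adj_iff_of_card_eq_left hkl hw).1 h).2⟩
    · change w.1 ⊂ v.1 ∨ v.1 ⊂ w.1 at h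
      rcases h with h | h <;> have := card_lt_card h <;> omega
  · rintro ⟨hw, h⟩
    exact (adj_iff_of_card_eq_left hkl hw).2 ⟨hv, h⟩

lemma map_neighborFinset_of_card_eq_left (hkl : k < l) (hv : #v.1 = k) :
    ((setInclusionGraph n k l).neighborFinset v).map (Function.Embedding.subtype _) =
      {B ∈ powersetCard l (univ : Finset (Fin n)) | v.1 ⊆ B} := by
  ext B
  simp only [mem_map, mem_neighborFinset, adj_iff_of_card_eq_left hkl hv, mem_filter,
    mem_powersetCard_univ, Function.Embedding.coe_subtype]
  constructor
  · rintro ⟨w, hw, rfl⟩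
    exact hw
  · intro hB
    exact ⟨⟨B, .inr hB.1⟩, hB, rfl⟩

lemma map_neighborFinset_of_card_eq_right (hkl : k < l) (hv : #v.1 = l) :
    ((setInclusionGraph n k l).neighborFinset v).map (Function.Embedding.subtype _) =
      powersetCard k v.1 := by
  ext B
  simp only [mem_map, mem_neighborFinset, adj_iff_of_card_eq_right hkl hv, mem_powersetCard,
    Function.Embedding.coe_subtype]
  constructor
  · rintro ⟨w, hw, rfl⟩
    exact hw.symm
  · intro hB
    exact ⟨⟨B, .inl hB.2⟩, hB.symm, rfl⟩

lemma degree_of_card_eq_left (hkl : k < l) (hv : #v.1 = k) :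
    (setInclusionGraph n k l).degree v = (n - k).choose (l - k) := by
  rw [← card_neighborFinset_eq_degree, ← card_map, map_neighborFinset_of_card_eq_left hkl hv,
    card_filter_powersetCard_subset _ _ _ (subset_univ _) (by omega), card_univ,
    Fintype.card_fin, hv]

lemma degree_of_card_eq_right (hkl : k < l) (hv : #v.1 = l) :
    (setInclusionGraph n k l).degree v = l.choose k := by
  rw [← card_neighborFinset_eq_degree, ← card_map, map_neighborFinset_of_card_eq_right hkl hv,
    card_powersetCard, hv]

lemma degree_lt_of_card_eq (hkl : k < l) (hsum : k + l < n) (hv : #v.1 = k) (hw : #w.1 = l) :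
    (setInclusionGraph n k l).degree w < (setInclusionGraph n k l).degree v := by
  rw [degree_of_card_eq_left hkl hv, degree_of_card_eq_right hkl hw,
    ← Nat.choose_symm hkl.le]
  exact Nat.choose_lt_choose (by omega) (by omega) (by omega)

lemma card_neighborFinset_inter (hkl : k < l) (hv : #v.1 = k) (hw : #w.1 = k) :
    #((setInclusionGraph n k l).neighborFinset v ∩ (setInclusionGraph n k l).neighborFinset w) =
      #{B ∈ powersetCard l (univ : Finset (Fin n)) | v.1 ∪ w.1 ⊆ B} := by
  rw [← card_map (Function.Embedding.subtype _), map_inter,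
    map_neighborFinset_of_card_eq_left hkl hv, map_neighborFinset_of_card_eq_left hkl hw,
    ← filter_and]
  simp only [union_subset_iff]

/-- The common neighbours of two `k`-sets are the `l`-supersets of their union; there are
`C(n - u, n - l)` of them, strictly decreasing in the size `u` of the union. -/
lemma johnsonGraph_adj_iff_card_neighborFinset_inter (hkl : k < l) (hln : l < n)
    (hv : #v.1 = k) (hw : #w.1 = k) :
    (johnsonGraph k).Adj v.1 w.1 ↔
      #((setInclusionGraph n k l).neighborFinset v ∩ (setInclusionGraph n k l).neighborFinset w)
        = (n - (k + 1)).choose (n - l) := by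
  rw [johnsonGraph_adj_iff_card_union hv hw, card_neighborFinset_inter hkl hv hw]
  set u := #(v.1 ∪ w.1)
  have hku : k ≤ u := hv ▸ card_le_card subset_union_left
  by_cases hul : u ≤ l
  · rw [card_filter_powersetCard_subset _ _ _ (subset_univ _) hul, card_univ, Fintype.card_fin,
      Nat.choose_symm_of_eq_add (show n - u = l - u + (n - l) by omega)]
    constructor
    · intro h
      rw [h]
    · intro h
      by_contra hne
      rcases Nat.lt_or_gt_of_ne hne with h' | h'
      · exact (Nat.choose_lt_choose (by omega) (by omega) (by omega)).ne' h
      · exact (Nat.choose_lt_choose (by omega) (by omega) (by omega)).ne h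
  · have h_empty : {B ∈ powersetCard l (univ : Finset (Fin n)) | v.1 ∪ w.1 ⊆ B} = ∅ :=
      filter_eq_empty_iff.2 fun B hB hvwB => by
        have := card_le_card hvwB
        rw [mem_powersetCard_univ] at hB
        omega
    rw [h_empty, card_empty]
    have := Nat.choose_pos (show n - l ≤ n - (k + 1) by omega)
    omega

variable (e : setInclusionGraph n k l ≃g setInclusionGraph n k l)

lemma card_apply_eq_left (hkl : k < l) (hsum : k + l < n) (hv : #v.1 = k) : #(e v).1 = k := by
  refine (e v).2.resolve_right fun h => ?_
  have := degree_lt_of_card_eq hkl hsum hv h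
  rw [e.degree_eq] at this
  exact lt_irrefl _ this

lemma card_apply_eq_right (hkl : k < l) (hsum : k + l < n) (hv : #v.1 = l) : #(e v).1 = l := by
  refine (e v).2.resolve_left fun h => ?_
  have := card_apply_eq_left e.symm hkl hsum h
  rw [RelIso.symm_apply_apply] at this
  omega

def lowerMap (A : Finset (Fin n)) : Finset (Fin n) :=
  if h : #A = k then (e ⟨A, .inl h⟩).1 else A

lemma lowerMap_of_card_eq {A : Finset (Fin n)} (hA : #A = k) :
    lowerMap e A = (e ⟨A, .inl hA⟩).1 :=
  dif_pos hA

lemma isJohnsonMap_lowerMap (hkl : k < l) (hsum : k + l < n) : IsJohnsonMap k (lowerMap e) where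
  mapsTo A (hA : #A = k) := by
    show #(lowerMap e A) = k
    rw [lowerMap_of_card_eq e hA]
    exact card_apply_eq_left e hkl hsum hA
  injOn A (hA : #A = k) B (hB : #B = k) hAB := by
    rw [lowerMap_of_card_eq e hA, lowerMap_of_card_eq e hB] at hAB
    exact congrArg Subtype.val (e.injective (Subtype.ext hAB))
  adj_iff A B hA hB := by
    rw [lowerMap_of_card_eq e hA, lowerMap_of_card_eq e hB,
      johnsonGraph_adj_iff_card_neighborFinset_inter hkl (by omega)
        (card_apply_eq_left e hkl hsum hA) (card_apply_eq_left e hkl hsum hB),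
      e.card_neighborFinset_inter,
      ← johnsonGraph_adj_iff_card_neighborFinset_inter (v := ⟨A, .inl hA⟩)
        (w := ⟨B, .inl hB⟩) hkl (by omega) hA hB]

lemma apply_eq_image_of_card_eq_right (hk : 1 ≤ k) (hkl : k < l) (hsum : k + l < n)
    {σ : Equiv.Perm (Fin n)} (hσ : ∀ v : {s : Finset (Fin n) // #s = k ∨ #s = l}, #v.1 = k →
      (e v).1 = v.1.image σ) (hv : #v.1 = l) : (e v).1 = v.1.image σ := by
  refine (eq_of_subset_of_card_le ?_ ?_).symm
  · intro x hx
    obtain ⟨y, hy, rfl⟩ := mem_image.1 hx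
    obtain ⟨A, hyA, hAv, hA⟩ := exists_subsuperset_card_eq (n := k) (singleton_subset_iff.2 hy)
      (by rwa [card_singleton]) (by omega)
    let a : {s : Finset (Fin n) // #s = k ∨ #s = l} := ⟨A, .inl hA⟩
    have h_adj : (setInclusionGraph n k l).Adj (e a) (e v) :=
      e.map_adj_iff.2 ((adj_iff_of_card_eq_left hkl hA).2 ⟨hv, hAv⟩)
    refine ((adj_iff_of_card_eq_left hkl (card_apply_eq_left e hkl hsum hA)).1 h_adj).2 ?_
    rw [hσ a hA]
    exact mem_image_of_mem σ (singleton_subset_iff.1 hyA)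
  · rw [card_image_of_injective _ σ.injective, card_apply_eq_right e hkl hsum hv, hv]

variable (k l) in
def permIso (σ : Equiv.Perm (Fin n)) : setInclusionGraph n k l ≃g setInclusionGraph n k l where
  toEquiv := σ.finsetCongr.subtypeEquiv fun s => by simp
  map_rel_iff' {v w} := by
    change (v.1.map _ ⊂ w.1.map _ ∨ w.1.map _ ⊂ v.1.map _) ↔ (v.1 ⊂ w.1 ∨ w.1 ⊂ v.1)
    simp only [map_ssubset_map]

lemma permIso_apply_val (σ : Equiv.Perm (Fin n)) :
    (permIso k l σ v).1 = v.1.map σ.toEmbedding :=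
  rfl

variable (n k l) in
def permHom : Equiv.Perm (Fin n) →* (setInclusionGraph n k l ≃g setInclusionGraph n k l) :=
  MonoidHom.mk' (permIso k l) fun σ τ =>
    RelIso.ext fun v => Subtype.ext (by
      rw [RelIso.mul_apply, permIso_apply_val, permIso_apply_val, permIso_apply_val,
        Finset.map_map]
      rfl)

lemma permHom_injective (hk : 1 ≤ k) (hkn : k < n) : Function.Injective (permHom n k l) := by
  refine (injective_iff_map_eq_one _).2 fun σ hσ => Equiv.Perm.eq_one_of_forall_map_eq hk
    (by rwa [Fintype.card_fin]) fun S hS => ?_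
  exact congrArg (fun e => (e ⟨S, .inl hS⟩ : {s : Finset (Fin n) // #s = k ∨ #s = l}).1) hσ

lemma permHom_surjective (hk : 1 ≤ k) (hkl : k < l) (hsum : k + l < n) :
    Function.Surjective (permHom n k l) := by
  intro e
  obtain ⟨σ, hσ⟩ := (isJohnsonMap_lowerMap e hkl hsum).exists_perm hk
    (by rw [Fintype.card_fin]; omega)
  have h_lower : ∀ v : {s : Finset (Fin n) // #s = k ∨ #s = l}, #v.1 = k →
      (e v).1 = v.1.image σ := fun v hv => by
    rw [← hσ v.1 hv, lowerMap_of_card_eq e hv]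
  refine ⟨σ, RelIso.ext fun v => Subtype.ext ?_⟩
  change v.1.map σ.toEmbedding = (e v).1
  rw [map_eq_image]
  rcases v.2 with hv | hv
  · exact (h_lower v hv).symm
  · exact (apply_eq_image_of_card_eq_right e hk hkl hsum h_lower hv).symm

end setInclusionGraph

theorem stmt_7_general (n k l : ℕ) (hk : 1 ≤ k) (hkl : k < l)
    (hsum : k + l ≤ n) (hne : n ≠ k + l) :
    Nonempty ((setInclusionGraph n k l ≃g setInclusionGraph n k l) ≃* Equiv.Perm (Fin n)) := by
  have hlt : k + l < n := lt_of_le_of_ne hsum hne.symm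
  exact ⟨(MulEquiv.ofBijective (setInclusionGraph.permHom n k l)
    ⟨setInclusionGraph.permHom_injective hk (by omega),
      setInclusionGraph.permHom_surjective hk hkl hlt⟩).symm⟩

/-- For `1 ≤ k < l ≤ n−1` and `k + l ≤ n` with `n ≠ k + l`, the automorphism
group of the set-inclusion graph `G(n,k,l)` is isomorphic to `Sym([n])`. -/
theorem stmt_7 (n k l : ℕ) (hk : 1 ≤ k) (hkl : k < l) (hl : l ≤ n - 1)
    (hsum : k + l ≤ n) (hne : n ≠ k + l) :
    Nonempty ((setInclusionGraph n k l ≃g setInclusionGraph n k l) ≃* Equiv.Perm (Fin n)) :=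
  stmt_7_general n k l hk hkl hsum hne
end

section
/- Let G be a finite connected non-bipartite vd-graph, and let a₀ be a positive integer. For vertices v, w of G let c(v,w) = |N(v) ∩ N(w)| denote the number of common neighbors of v and w. Suppose that c(v,w) = a₀ whenever v and w are adjacent, and c(v,w) ≠ a₀ whenever v and w are distinct and non-adjacent. Then Aut(G × K₂) ≅ Aut(G) × ℤ₂; that is, G is a stable graph. -/
open SimpleGraph

/-- The bipartite double `B(G) = G × K₂` of a graph `G`: vertices are `V(G) × {0,1}`,
and `(x,a)` is adjacent to `(y,b)` iff `a ≠ b` and `x` is adjacent to `y` in `G`. -/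
def bipartiteDouble {V : Type*} (G : SimpleGraph V) : SimpleGraph (V × Bool) where
  Adj x y := x.2 ≠ y.2 ∧ G.Adj x.1 y.1
  symm := ⟨fun x y h => ⟨h.1.symm, h.2.symm⟩⟩
  loopless := ⟨fun x h => h.1 rfl⟩

/-!
An automorphism of `B(G)` preserves the number of common neighbours. Two distinct vertices of
`B(G)` in different layers have no common neighbour, and two in the same layer have as many as
in `G`; so the hypothesis on `a₀` says that the pairs with `a₀` common neighbours in `B(G)` are
exactly the edges of `G □ K̄₂` (`G □ ⊥`), the disjoint union of the two layers. Hence every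
automorphism of `B(G)` is also one of `G □ K̄₂`, and as `G` is connected it permutes the two
layers. On each layer it then induces an automorphism of `G`, say `σ₀` and `σ₁`; adjacency across
the layers gives `N(σ₁ w) = N(σ₀ w)`, so `σ₀ = σ₁` because `G` is vertex-determining. Thus every
automorphism of `B(G)` is `(v, a) ↦ (σ v, π a)` for some `σ ∈ Aut G` and `π ∈ Sym {0, 1} ≅ ℤ₂`.
-/

namespace SimpleGraph

variable {V W : Type*}

theorem Iso.image_commonNeighbors {G : SimpleGraph V} {H : SimpleGraph W} (f : G ≃g H)
    (v w : V) : f '' G.commonNeighbors v w = H.commonNeighbors (f v) (f w) := by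
  simp only [commonNeighbors_eq, Set.image_inter f.injective, f.image_neighborSet]

theorem Iso.ncard_commonNeighbors {G : SimpleGraph V} {H : SimpleGraph W} (f : G ≃g H)
    (v w : V) : (H.commonNeighbors (f v) (f w)).ncard = (G.commonNeighbors v w).ncard := by
  rw [← f.image_commonNeighbors, Set.ncard_image_of_injective _ f.injective]

def Iso.ofCommonNeighbors {H L : SimpleGraph W} {a₀ : ℕ}
    (hL : ∀ x y, x ≠ y → ((H.commonNeighbors x y).ncard = a₀ ↔ L.Adj x y)) (e : H ≃g H) :
    L ≃g L where
  toEquiv := e.toEquiv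
  map_rel_iff' {x y} := by
    by_cases hxy : x = y
    · subst hxy
      simp
    · change L.Adj (e x) (e y) ↔ L.Adj x y
      rw [← hL x y hxy, ← hL _ _ (e.injective.ne hxy), e.ncard_commonNeighbors]

section BoxProdBot

variable {G : SimpleGraph V}

theorem boxProd_bot_adj {x y : V × Bool} :
    (G □ (⊥ : SimpleGraph Bool)).Adj x y ↔ x.2 = y.2 ∧ G.Adj x.1 y.1 := by
  simp [boxProd_adj, and_comm]

theorem exists_perm_snd_apply_eq [Nonempty V] (hG : G.Preconnected)
    (e : (G □ (⊥ : SimpleGraph Bool)) ≃g (G □ ⊥)) :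
    ∃ π : Equiv.Perm Bool, ∀ x, (e x).2 = π x.2 := by
  obtain ⟨v₀⟩ := ‹Nonempty V›
  have hlayer (x : V × Bool) : (e x).2 = (e (v₀, x.2)).2 := by
    have hx : (G □ ⊥).Reachable x (v₀, x.2) := reachable_boxProd.2 ⟨hG _ _, .rfl⟩
    exact reachable_bot.1 (reachable_boxProd.1 (hx.map e.toHom)).2
  have hsurj : Function.Surjective fun a => (e (v₀, a)).2 := fun b =>
    ⟨(e.symm (v₀, b)).2, by dsimp only; rw [← hlayer, e.apply_symm_apply]⟩
  exact ⟨Equiv.ofBijective _ hsurj.bijective_of_finite, hlayer⟩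

def layerIso (e : (G □ (⊥ : SimpleGraph Bool)) ≃g (G □ ⊥)) (π : Equiv.Perm Bool)
    (he : ∀ x, (e x).2 = π x.2) (a : Bool) : G ≃g G where
  toFun v := (e (v, a)).1
  invFun v := (e.symm (v, π a)).1
  left_inv v := by
    have hv : e (v, a) = ((e (v, a)).1, π a) := Prod.ext rfl (he _)
    simp only
    rw [← hv, e.symm_apply_apply]
  right_inv v := by
    have ha : (e.symm (v, π a)).2 = a := π.injective (by rw [← he, e.apply_symm_apply])
    have hv : ((e.symm (v, π a)).1, a) = e.symm (v, π a) := Prod.ext rfl ha.symm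
    simp only
    rw [hv, e.apply_symm_apply]
  map_rel_iff' {v w} := by
    change G.Adj (e (v, a)).1 (e (w, a)).1 ↔ G.Adj v w
    simpa [boxProd_bot_adj, he] using e.map_adj_iff (v := (v, a)) (w := (w, a))

end BoxProdBot

end SimpleGraph

section

variable {V : Type*} (G : SimpleGraph V)

@[simp]
theorem bipartiteDouble_adj {x y : V × Bool} :
    (bipartiteDouble G).Adj x y ↔ x.2 ≠ y.2 ∧ G.Adj x.1 y.1 :=
  Iff.rfl

theorem ncard_commonNeighbors_bipartiteDouble (v w : V) (a b : Bool) :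
    ((bipartiteDouble G).commonNeighbors (v, a) (w, b)).ncard =
      if a = b then (G.commonNeighbors v w).ncard else 0 := by
  split_ifs with hab
  · subst hab
    have : (bipartiteDouble G).commonNeighbors (v, a) (w, a) =
        (·, !a) '' G.commonNeighbors v w := by
      ext ⟨u, c⟩
      cases a <;> cases c <;> simp [mem_commonNeighbors]
    rw [this, Set.ncard_image_of_injective _ (Prod.mk_left_injective _)]
  · convert Set.ncard_empty (V × Bool)
    ext ⟨u, c⟩
    cases a <;> cases b <;> cases c <;> simp_all [mem_commonNeighbors]

theorem ncard_commonNeighbors_bipartiteDouble_eq_iff {a₀ : ℕ} (ha₀ : 0 < a₀)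
    (hG : ∀ v w, v ≠ w → ((G.commonNeighbors v w).ncard = a₀ ↔ G.Adj v w))
    (x y : V × Bool) (hxy : x ≠ y) :
    ((bipartiteDouble G).commonNeighbors x y).ncard = a₀ ↔ (G □ ⊥).Adj x y := by
  obtain ⟨v, a⟩ := x
  obtain ⟨w, b⟩ := y
  rw [ncard_commonNeighbors_bipartiteDouble, boxProd_bot_adj]
  by_cases hab : a = b
  · subst hab
    simpa using hG v w (by rintro rfl; exact hxy rfl)
  · simp [hab, ha₀.ne]

def prodPermHom : (G ≃g G) × Equiv.Perm Bool →* (bipartiteDouble G ≃g bipartiteDouble G) where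
  toFun p :=
    { toEquiv := p.1.toEquiv.prodCongr p.2
      map_rel_iff' := by simp [p.2.injective.ne_iff, p.1.map_adj_iff] }
  map_one' := rfl
  map_mul' _ _ := rfl

@[simp]
theorem prodPermHom_apply (p : (G ≃g G) × Equiv.Perm Bool) (x : V × Bool) :
    prodPermHom G p x = (p.1 x.1, p.2 x.2) :=
  rfl

theorem prodPermHom_injective [Nonempty V] : Function.Injective (prodPermHom G) := by
  intro p q hpq
  obtain ⟨v₀⟩ := ‹Nonempty V›
  have h (x : V × Bool) : (p.1 x.1, p.2 x.2) = (q.1 x.1, q.2 x.2) := by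
    simpa using DFunLike.congr_fun hpq x
  exact Prod.ext (RelIso.ext fun v => congrArg Prod.fst (h (v, false)))
    (Equiv.ext fun a => congrArg Prod.snd (h (v₀, a)))

variable {G}

theorem prodPermHom_surjective [Nonempty V] (hG : G.Preconnected)
    (hvd : ∀ v w : V, G.neighborSet v = G.neighborSet w → v = w) {a₀ : ℕ} (ha₀ : 0 < a₀)
    (hc : ∀ v w, v ≠ w → ((G.commonNeighbors v w).ncard = a₀ ↔ G.Adj v w)) :
    Function.Surjective (prodPermHom G) := by
  intro e
  let eL := e.ofCommonNeighbors (ncard_commonNeighbors_bipartiteDouble_eq_iff G ha₀ hc)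
  obtain ⟨π, hπ⟩ := exists_perm_snd_apply_eq hG eL
  let σ := layerIso eL π hπ
  have he (x : V × Bool) : e x = (σ x.2 x.1, π x.2) := Prod.ext rfl (hπ x)
  have hcross (v w : V) : G.Adj (σ false v) (σ true w) ↔ G.Adj v w := by
    simpa [he, π.injective.ne_iff] using e.map_adj_iff (v := (v, false)) (w := (w, true))
  have hσ : σ true = σ false := by
    ext w
    refine hvd _ _ (Set.ext fun u => ?_)
    obtain ⟨v, rfl⟩ := (σ false).surjective u
    rw [mem_neighborSet, mem_neighborSet, G.adj_comm, hcross, (σ false).map_adj_iff, G.adj_comm]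
  refine ⟨(σ false, π), RelIso.ext fun ⟨v, a⟩ => ?_⟩
  cases a <;> simp [he, hσ]

end

noncomputable def Equiv.Perm.boolMulEquiv : Equiv.Perm Bool ≃* Multiplicative (ZMod 2) :=
  mulEquivOfPrimeCardEq (p := 2) (by simp [Fintype.card_perm]) (by simp)

theorem stmt_11_general {V : Type*} (G : SimpleGraph V)
    (hconn : G.Connected)
    (hvd : ∀ v w : V, G.neighborSet v = G.neighborSet w → v = w)
    (a₀ : ℕ) (ha₀ : 0 < a₀)
    (hadj : ∀ v w : V, G.Adj v w → (G.commonNeighbors v w).ncard = a₀)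
    (hnonadj : ∀ v w : V, v ≠ w → ¬ G.Adj v w → (G.commonNeighbors v w).ncard ≠ a₀) :
    Nonempty ((bipartiteDouble G ≃g bipartiteDouble G) ≃*
      (G ≃g G) × Multiplicative (ZMod 2)) := by
  have hc (v w : V) (hvw : v ≠ w) : (G.commonNeighbors v w).ncard = a₀ ↔ G.Adj v w :=
    ⟨fun h => by_contra (hnonadj v w hvw · h), hadj v w⟩
  have := hconn.nonempty
  have hbij : Function.Bijective (prodPermHom G) :=
    ⟨prodPermHom_injective G, prodPermHom_surjective hconn.preconnected hvd ha₀ hc⟩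
  exact ⟨(MulEquiv.ofBijective _ hbij).symm.trans
    (MulEquiv.prodCongr (MulEquiv.refl _) Equiv.Perm.boolMulEquiv)⟩

/-- Let `G` be a finite connected non-bipartite vd-graph and `a₀` a positive
integer such that any two adjacent vertices have exactly `a₀` common neighbors, while any
two distinct non-adjacent vertices have a number of common neighbors different from `a₀`.
Then `Aut(G × K₂) ≅ Aut(G) × ℤ₂`, i.e. `G` is a stable graph. -/
theorem stmt_11 {V : Type*} [Fintype V] (G : SimpleGraph V)
    (hconn : G.Connected) (hnonbip : ¬ G.Colorable 2)
    (hvd : ∀ v w : V, G.neighborSet v = G.neighborSet w → v = w)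
    (a₀ : ℕ) (ha₀ : 0 < a₀)
    (hadj : ∀ v w : V, G.Adj v w → (G.commonNeighbors v w).ncard = a₀)
    (hnonadj : ∀ v w : V, v ≠ w → ¬ G.Adj v w → (G.commonNeighbors v w).ncard ≠ a₀) :
    Nonempty ((bipartiteDouble G ≃g bipartiteDouble G) ≃*
      (G ≃g G) × Multiplicative (ZMod 2)) :=
  stmt_11_general G hconn hvd a₀ ha₀ hadj hnonadj
end
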